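/- arXiv:2002.12012 — 2 statements merged into one kernel-verified Lean document; each statement's English description precedes it below -/
import Mathlib

section
/- Let d > 0, δ ∈ (0, d), T > 1, and let E : [T,∞) → ℝ be a nonnegative differentiable function such that E'(t) ≥ -c t⁻¹ (log t)⁻¹ E(t) for all t ≥ T with 0 ≤ c < δ, and such that E(t) ≤ C (log t)^{-d} for all t ≥ T and some constant C > 0. Then E(t) = 0 for all t ≥ T. -/
theorem stmt1 (E : ℝ → ℝ) (T c δ d C : ℝ) (hT : T > 1) (hc : 0 ≤ c) (hcδ : c < δ)
    (hδd : δ < d) (hd : 0 < d) (hC : 0 < C)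
    (hdiff : ∀ t ≥ T, DifferentiableAt ℝ E t)
    (hpos : ∀ t ≥ T, 0 ≤ E t)
    (hineq : ∀ t ≥ T, deriv E t ≥ -c * t⁻¹ * (Real.log t)⁻¹ * E t)
    (hdecay : ∀ t ≥ T, E t ≤ C * (Real.log t) ^ (-d)) :
    ∀ t ≥ T, E t = 0 := by
  set F : ℝ → ℝ := fun t => Real.log t ^ c * E t with hF
  -- basic facts for t ≥ T
  have hlog : ∀ t ≥ T, 0 < Real.log t := fun t ht =>
    Real.log_pos (lt_of_lt_of_le hT ht)
  have htpos : ∀ t ≥ T, (0:ℝ) < t := fun t ht => by linarith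
  -- F has a derivative at each t ≥ T
  have hFd : ∀ t ≥ T, HasDerivAt F
      (c * Real.log t ^ (c-1) * t⁻¹ * E t + Real.log t ^ c * deriv E t) t := by
    intro t ht
    have hl := hlog t ht
    have hg : HasDerivAt (fun s => Real.log s ^ c) (c * Real.log t ^ (c-1) * t⁻¹) t := by
      have h1 : HasDerivAt (fun x : ℝ => x ^ c) (c * Real.log t ^ (c-1)) (Real.log t) :=
        Real.hasDerivAt_rpow_const (Or.inl (ne_of_gt hl))
      have h2 : HasDerivAt Real.log t⁻¹ t := Real.hasDerivAt_log (ne_of_gt (htpos t ht))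
      exact h1.comp t h2
    exact hg.mul ((hdiff t ht).hasDerivAt)
  -- the derivative of F is nonnegative on [T,∞)
  have hFd0 : ∀ t ≥ T, 0 ≤ c * Real.log t ^ (c-1) * t⁻¹ * E t
      + Real.log t ^ c * deriv E t := by
    intro t ht
    have hl := hlog t ht
    have htp := htpos t ht
    have key : Real.log t ^ c * (-c * t⁻¹ * (Real.log t)⁻¹ * E t)
        ≤ Real.log t ^ c * deriv E t :=
      mul_le_mul_of_nonneg_left (hineq t ht) (Real.rpow_nonneg hl.le c)
    have hpow : Real.log t ^ c * (Real.log t)⁻¹ = Real.log t ^ (c-1) := by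
      rw [← Real.rpow_neg_one (Real.log t), ← Real.rpow_add hl]
      ring_nf
    have h3 : Real.log t ^ c * (-c * t⁻¹ * (Real.log t)⁻¹ * E t)
        = -(c * Real.log t ^ (c-1) * t⁻¹ * E t) := by
      rw [← hpow]; ring
    linarith [key]
  -- F is monotone on [T,∞)
  have hmono : MonotoneOn F (Set.Ici T) := by
    apply monotoneOn_of_deriv_nonneg (convex_Ici T)
    · intro t ht
      exact ((hFd t ht).differentiableAt).continuousAt.continuousWithinAt
    · intro t ht
      rw [interior_Ici] at ht
      exact ((hFd t ht.le).differentiableAt).differentiableWithinAt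
    · intro t ht
      rw [interior_Ici] at ht
      rw [(hFd t ht.le).deriv]
      exact hFd0 t ht.le
  -- upper bound: F s ≤ C * (log s)^(c-d)
  have hub : ∀ s ≥ T, F s ≤ C * Real.log s ^ (c - d) := by
    intro s hs
    have hl := hlog s hs
    have : F s ≤ Real.log s ^ c * (C * Real.log s ^ (-d)) :=
      mul_le_mul_of_nonneg_left (hdecay s hs) (Real.rpow_nonneg hl.le c)
    calc F s ≤ Real.log s ^ c * (C * Real.log s ^ (-d)) := this
      _ = C * Real.log s ^ (c - d) := by
        rw [mul_left_comm, ← Real.rpow_add hl]; ring_nf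
  -- the upper bound tends to 0
  have htend : Filter.Tendsto (fun s => C * Real.log s ^ (c - d))
      Filter.atTop (nhds 0) := by
    have h1 : Filter.Tendsto (fun x : ℝ => x ^ (c - d)) Filter.atTop (nhds 0) := by
      have := tendsto_rpow_neg_atTop (show (0:ℝ) < d - c by linarith)
      simpa [neg_sub] using this
    have h2 := (h1.comp Real.tendsto_log_atTop).const_mul C
    simpa using h2
  intro t ht
  -- F t ≤ 0
  have hle : F t ≤ 0 := by
    apply ge_of_tendsto htend
    filter_upwards [Filter.eventually_ge_atTop t] with s hs
    exact le_trans (hmono ht (le_trans ht hs) hs) (hub s (le_trans ht hs))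
  have hge : 0 ≤ F t :=
    mul_nonneg (Real.rpow_nonneg (hlog t ht).le c) (hpos t ht)
  have hF0 : F t = 0 := le_antisymm hle hge
  have hlp : 0 < Real.log t ^ c := Real.rpow_pos_of_pos (hlog t ht) c
  have : Real.log t ^ c * E t = 0 := hF0
  exact (mul_eq_zero.mp this).resolve_left (ne_of_gt hlp)
end

section
/- Suppose f : [T_0,∞) → ℝ is differentiable, f(t) ≥ 0, f(t) ≤ C(log t)^{-d} for all sufficiently large t for some fixed C and d > 0, and for every ε > 0 there is T = T(ε) such that f'(t) ≥ -ε t⁻¹ (log t)⁻¹ f(t) on [T,∞). Then f(t) = 0 for all sufficiently large t. -/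
theorem stmt6 (f : ℝ → ℝ) (T₀ d C : ℝ) (hT₀ : 1 < T₀) (hd : 0 < d) (hC : 0 < C)
    (hdiff : ∀ t ≥ T₀, DifferentiableAt ℝ f t)
    (hpos : ∀ t ≥ T₀, 0 ≤ f t)
    (hineq : ∀ ε > 0, ∃ T ≥ T₀, ∀ t ≥ T, deriv f t ≥ -ε * t⁻¹ * (Real.log t)⁻¹ * f t)
    (hdecay : ∀ t ≥ T₀, f t ≤ C * (Real.log t) ^ (-d)) :
    ∃ T', ∀ t ≥ T', f t = 0 := by
  obtain ⟨T, hTT₀, hT⟩ := hineq (d/2) (by linarith)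
  have hT1 : (1:ℝ) < T := lt_of_lt_of_le hT₀ hTT₀
  set ε : ℝ := d/2 with hε
  set g : ℝ → ℝ := fun s => f s * Real.log s ^ ε with hg
  have key : ∀ s : ℝ, T ≤ s →
      HasDerivAt g (deriv f s * Real.log s ^ ε
        + f s * (ε * Real.log s ^ (ε-1) * s⁻¹)) s := by
    intro s hs
    have hs1 : (1:ℝ) < s := lt_of_lt_of_le hT1 hs
    have hL : 0 < Real.log s := Real.log_pos hs1
    have h1 : HasDerivAt Real.log s⁻¹ s := Real.hasDerivAt_log (by linarith)
    have h2 : HasDerivAt (fun x : ℝ => x ^ ε) (ε * Real.log s ^ (ε-1)) (Real.log s) :=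
      Real.hasDerivAt_rpow_const (Or.inl (ne_of_gt hL))
    have h3 : HasDerivAt (fun x => Real.log x ^ ε) (ε * Real.log s ^ (ε-1) * s⁻¹) s :=
      h2.comp s h1
    have h4 : HasDerivAt f (deriv f s) s :=
      (hdiff s (le_trans hTT₀ hs)).hasDerivAt
    exact h4.mul h3
  have hmono : MonotoneOn g (Set.Ici T) := by
    apply monotoneOn_of_deriv_nonneg (convex_Ici T)
    · intro s hs
      exact ((key s hs).continuousAt).continuousWithinAt
    · intro s hs
      rw [interior_Ici] at hs
      exact ((key s (le_of_lt hs)).differentiableAt).differentiableWithinAt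
    · intro s hs
      rw [interior_Ici] at hs
      have hs' : T ≤ s := le_of_lt hs
      rw [(key s hs').deriv]
      have hs1 : (1:ℝ) < s := lt_of_lt_of_le hT1 hs'
      have hsp : (0:ℝ) < s := by linarith
      have hL : 0 < Real.log s := Real.log_pos hs1
      have hf' := hT s hs'
      have hLe : (0:ℝ) < Real.log s ^ ε := Real.rpow_pos_of_pos hL ε
      have hrw : Real.log s ^ (ε-1) = Real.log s ^ ε * (Real.log s)⁻¹ := by
        rw [Real.rpow_sub hL, Real.rpow_one, div_eq_mul_inv]
      have h5 : deriv f s * Real.log s ^ ε ≥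
          (-ε * s⁻¹ * (Real.log s)⁻¹ * f s) * Real.log s ^ ε :=
        mul_le_mul_of_nonneg_right hf' (le_of_lt hLe)
      rw [hrw]
      nlinarith [hpos s (le_trans hTT₀ hs')]
  refine ⟨T, fun t ht => ?_⟩
  have ht1 : (1:ℝ) < t := lt_of_lt_of_le hT1 ht
  have hLt : 0 < Real.log t := Real.log_pos ht1
  have hLte : 0 < Real.log t ^ ε := Real.rpow_pos_of_pos hLt ε
  have hbound : ∀ S : ℝ, t ≤ S → g t ≤ C * Real.log S ^ (-(d/2)) := by
    intro S hS
    have hST : T ≤ S := le_trans ht hS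
    have hS1 : (1:ℝ) < S := lt_of_lt_of_le hT1 hST
    have hLS : 0 < Real.log S := Real.log_pos hS1
    have h1 : g t ≤ g S := hmono ht hST hS
    have h2 : g S ≤ C * Real.log S ^ (-d) * Real.log S ^ ε := by
      apply mul_le_mul_of_nonneg_right (hdecay S (le_trans hTT₀ hST))
        (le_of_lt (Real.rpow_pos_of_pos hLS ε))
    have h3 : C * Real.log S ^ (-d) * Real.log S ^ ε = C * Real.log S ^ (-(d/2)) := by
      rw [mul_assoc, ← Real.rpow_add hLS]
      congr 2
      rw [hε]; ring
    linarith [h1, h2.trans_eq h3]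
  have htend : Filter.Tendsto (fun S => C * Real.log S ^ (-(d/2)))
      Filter.atTop (nhds 0) := by
    have h1 : Filter.Tendsto (fun x : ℝ => x ^ (-(d/2))) Filter.atTop (nhds 0) :=
      tendsto_rpow_neg_atTop (by linarith)
    have := (h1.comp Real.tendsto_log_atTop).const_mul C
    simpa using this
  have hgt : g t ≤ 0 := by
    apply ge_of_tendsto htend
    filter_upwards [Filter.eventually_ge_atTop t] with S hS
    exact hbound S hS
  have hft : 0 ≤ f t := hpos t (le_trans hTT₀ ht)
  have hgt' : f t * Real.log t ^ ε ≤ 0 := hgt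
  have hle : f t ≤ 0 := by
    by_contra h
    push_neg at h
    nlinarith [mul_pos h hLte]
  linarith
end
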